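/- arXiv:math/0404030 — 2 statements merged into one kernel-verified Lean document; each statement's English description precedes it below -/
import Mathlib

section
/- The braid b⁴ = σ_2^{−7} σ_1 σ_2 Δ_3^2 in the braid group B_3 is not quasipositive. -/
open FreeGroup in
/-- The braid relations on `n` generators. -/
def braidRels (n : ℕ) : Set (FreeGroup (Fin n)) :=
  {r | (∃ i j : Fin n, (i : ℕ) + 1 = (j : ℕ) ∧
          r = of i * of j * of i * (of j * of i * of j)⁻¹) ∨
       (∃ i j : Fin n, (i : ℕ) + 2 ≤ (j : ℕ) ∧
          r = of i * of j * (of j * of i)⁻¹)}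

/-- The braid group `B_{n+1}`, presented with `n` generators `σ_1, …, σ_n`
(so `Braid (m - 1)` is the braid group on `m` strands). -/
def Braid (n : ℕ) : Type := PresentedGroup (braidRels n)

instance (n : ℕ) : Group (Braid n) :=
  inferInstanceAs (Group (PresentedGroup (braidRels n)))

/-- The Artin generator `σ_{i+1}` of the braid group (indices start at `0`,
so `σ 0` is the generator usually written `σ_1`). -/
def σ {n : ℕ} (i : Fin n) : Braid n := PresentedGroup.of i

/-- A braid is quasipositive if it can be written as a (possibly empty) product
of conjugates `w σ_1 w⁻¹` of the first Artin generator. -/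
def Quasipositive {n : ℕ} [NeZero n] (b : Braid n) : Prop :=
  ∃ l : List (Braid n), b = (l.map fun w => w * σ 0 * w⁻¹).prod


/-- `σ_1` in the braid group `B_3`. -/
def σ₁ : Braid 2 := σ 0
/-- `σ_2` in the braid group `B_3`. -/
def σ₂ : Braid 2 := σ 1
/-- The Garside element `Δ_3 = σ_1 σ_2 σ_1` of `B_3`. -/
def Δ₃ : Braid 2 := σ₁ * σ₂ * σ₁

/- ### Auxiliary material -/

/-- If `f 0, f 1` satisfy the braid relation, the braid relations on two
generators are killed by `FreeGroup.lift f`. -/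
lemma braidRels_check {G : Type*} [Group G] (f : Fin 2 → G)
    (h : f 0 * f 1 * f 0 = f 1 * f 0 * f 1) :
    ∀ r ∈ braidRels 2, FreeGroup.lift f r = 1 := by
  rintro r (⟨i, j, hij, rfl⟩ | ⟨i, j, hij, rfl⟩)
  · fin_cases i <;> fin_cases j <;> simp_all [mul_inv_eq_one]
  · fin_cases i <;> fin_cases j <;> simp_all

abbrev SL2 := Matrix.SpecialLinearGroup (Fin 2) ℤ

def S1 : SL2 := ⟨!![1,1;0,1], by decide⟩
def S2 : SL2 := ⟨!![1,0;-1,1], by decide⟩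
def S2' : SL2 := ⟨!![1,0;1,1], by decide⟩

lemma hS2inv : S2⁻¹ = S2' := by
  apply inv_eq_of_mul_eq_one_left
  apply Subtype.ext
  show (!![1,0;1,1] * !![1,0;-1,1] : Matrix (Fin 2) (Fin 2) ℤ) = 1
  decide

lemma braidrel_SL2 : (![S1, S2]) 0 * (![S1, S2]) 1 * (![S1, S2]) 0
    = (![S1, S2]) 1 * (![S1, S2]) 0 * (![S1, S2]) 1 := by
  show S1 * S2 * S1 = S2 * S1 * S2
  apply Subtype.ext
  show (!![1,1;0,1] * !![1,0;-1,1] * !![1,1;0,1] : Matrix (Fin 2) (Fin 2) ℤ)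
      = !![1,0;-1,1] * !![1,1;0,1] * !![1,0;-1,1]
  decide

/-- The Burau representation at `t = -1`. -/
def ρ : Braid 2 →* SL2 :=
  PresentedGroup.toGroup (braidRels_check ![S1, S2] braidrel_SL2)

lemma ρ_σ₁ : ρ σ₁ = S1 := by
  show PresentedGroup.toGroup _ (PresentedGroup.of 0) = _
  rw [PresentedGroup.toGroup.of]; rfl
lemma ρ_σ₂ : ρ σ₂ = S2 := by
  show PresentedGroup.toGroup _ (PresentedGroup.of 1) = _
  rw [PresentedGroup.toGroup.of]; rfl

/-- The exponent sum homomorphism. -/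
def E : Braid 2 →* Multiplicative ℤ :=
  PresentedGroup.toGroup (f := fun _ => Multiplicative.ofAdd (1 : ℤ))
    (braidRels_check _ rfl)

lemma E_σ₁ : E σ₁ = Multiplicative.ofAdd (1 : ℤ) := by
  show PresentedGroup.toGroup _ (PresentedGroup.of 0) = _
  rw [PresentedGroup.toGroup.of]
lemma E_σ₂ : E σ₂ = Multiplicative.ofAdd (1 : ℤ) := by
  show PresentedGroup.toGroup _ (PresentedGroup.of 1) = _
  rw [PresentedGroup.toGroup.of]

theorem b4_not_quasipositive :
    ¬ Quasipositive ((σ₂ ^ 7)⁻¹ * σ₁ * σ₂ * Δ₃ ^ 2) := by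
  rintro ⟨l, hl⟩
  -- Step 1: the exponent sum is 1, so `l` has length 1.
  have he : E ((σ₂ ^ 7)⁻¹ * σ₁ * σ₂ * Δ₃ ^ 2) = Multiplicative.ofAdd (1 : ℤ) := by
    simp only [Δ₃, map_mul, map_inv, map_pow, E_σ₁, E_σ₂]
    decide
  have he2 : E ((l.map fun w => w * σ 0 * w⁻¹).prod)
      = Multiplicative.ofAdd (1 : ℤ) ^ l.length := by
    rw [map_list_prod, List.map_map]
    rw [List.prod_eq_pow_card _ (Multiplicative.ofAdd (1 : ℤ)) ?_, List.length_map]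
    intro x hx
    simp only [List.mem_map, Function.comp] at hx
    obtain ⟨w, -, rfl⟩ := hx
    rw [map_mul, map_mul, map_inv, mul_comm (E w), mul_assoc, mul_inv_cancel,
      mul_one]
    exact E_σ₁
  rw [← hl, he] at he2
  have hlen : l.length = 1 := by
    have := congrArg Multiplicative.toAdd he2
    simp only [toAdd_pow, toAdd_ofAdd, nsmul_eq_mul, mul_one] at this
    exact_mod_cast this.symm
  obtain ⟨w, rfl⟩ := List.length_eq_one_iff.mp hlen
  simp only [List.map_cons, List.map_nil, List.prod_cons, List.prod_nil,
    mul_one] at hl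
  -- Step 2: apply the Burau representation and take traces.
  have h1 : ρ ((σ₂ ^ 7)⁻¹ * σ₁ * σ₂ * Δ₃ ^ 2)
      = S2' ^ 7 * S1 * S2 * (S1 * S2 * S1) ^ 2 := by
    simp only [Δ₃, map_mul, map_inv, map_pow, ρ_σ₁, ρ_σ₂, ← inv_pow, hS2inv]
  have h2 : ρ ((σ₂ ^ 7)⁻¹ * σ₁ * σ₂ * Δ₃ ^ 2) = ρ w * S1 * (ρ w)⁻¹ := by
    rw [hl]; simp only [map_mul, map_inv]; rw [show ρ (σ 0) = S1 from ρ_σ₁]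
  have htr1 : Matrix.trace ((S2' ^ 7 * S1 * S2 * (S1 * S2 * S1) ^ 2 : SL2)
      : Matrix (Fin 2) (Fin 2) ℤ) = -8 := by
    show Matrix.trace (((!![1,0;1,1] : Matrix (Fin 2) (Fin 2) ℤ) ^ 7
      * !![1,1;0,1] * !![1,0;-1,1]
      * (!![1,1;0,1] * !![1,0;-1,1] * !![1,1;0,1]) ^ 2)) = -8
    decide
  have htr2 : Matrix.trace ((ρ w * S1 * (ρ w)⁻¹ : SL2)
      : Matrix (Fin 2) (Fin 2) ℤ) = 2 := by
    rw [Matrix.SpecialLinearGroup.coe_mul, Matrix.SpecialLinearGroup.coe_mul,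
      Matrix.trace_mul_comm, ← Matrix.mul_assoc,
      ← Matrix.SpecialLinearGroup.coe_mul, inv_mul_cancel,
      Matrix.SpecialLinearGroup.coe_one, Matrix.one_mul]
    decide
  rw [h1] at h2
  rw [h2] at htr1
  rw [htr2] at htr1
  exact absurd htr1 (by decide)
end

section
/- The braid σ_1^{−4} σ_2^{−1} σ_1 σ_2^{−2} σ_1 Δ_3^2 in the braid group B_3 is not quasipositive. -/
/-!
A quasipositive braid with exponent sum `1` is a single conjugate `w σ₁ w⁻¹`, and the given braid
has exponent sum `1`. Under the representation `σ₁ ↦ [[1, 1], [0, 1]]`, `σ₂ ↦ [[1, 0], [-1, 1]]`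
of `B₃` in `GL₂(ℤ)`, every conjugate of `σ₁` has trace `2`, while the given braid has trace `10`.
-/

namespace Braid

def expSum (n : ℕ) : Braid n →* Multiplicative ℤ :=
  PresentedGroup.toGroup (f := fun _ => Multiplicative.ofAdd 1) <| by
    rintro r (⟨i, j, -, rfl⟩ | ⟨i, j, -, rfl⟩) <;> simp

@[simp]
lemma expSum_σ {n : ℕ} (i : Fin n) : expSum n (σ i) = Multiplicative.ofAdd 1 :=
  PresentedGroup.toGroup.of _

lemma expSum_prod_conj_σ {n : ℕ} (i : Fin n) (l : List (Braid n)) :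
    expSum n (l.map fun w => w * σ i * w⁻¹).prod = Multiplicative.ofAdd (l.length : ℤ) := by
  induction l with
  | nil => rfl
  | cons w l ih =>
    simp only [List.map_cons, List.prod_cons, map_mul, map_inv, ih, expSum_σ,
      mul_inv_cancel_comm, List.length_cons, ← ofAdd_add]
    push_cast
    rw [add_comm]

lemma _root_.Quasipositive.exists_eq_conj_of_expSum_eq_one {n : ℕ} [NeZero n] {b : Braid n}
    (hb : Quasipositive b) (h : expSum n b = Multiplicative.ofAdd 1) :
    ∃ w, b = w * σ 0 * w⁻¹ := by
  obtain ⟨l, rfl⟩ := hb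
  rw [expSum_prod_conj_σ, Multiplicative.ofAdd.apply_eq_iff_eq] at h
  obtain ⟨w, rfl⟩ := List.length_eq_one_iff.mp (by exact_mod_cast h)
  exact ⟨w, by simp⟩

end Braid

open Matrix

def unipotentUpper : GL (Fin 2) ℤ := ⟨!![1, 1; 0, 1], !![1, -1; 0, 1], by decide, by decide⟩

def unipotentLower : GL (Fin 2) ℤ := ⟨!![1, 0; -1, 1], !![1, 0; 1, 1], by decide, by decide⟩

/-- The reduced Burau representation of `B₃` specialised at `t = -1`. -/
def burauNegOne : Braid 2 →* GL (Fin 2) ℤ :=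
  PresentedGroup.toGroup (f := ![unipotentUpper, unipotentLower]) <| by
    rintro r (⟨i, j, hij, rfl⟩ | ⟨i, j, hij, rfl⟩)
    · obtain ⟨rfl, rfl⟩ : i = 0 ∧ j = 1 := by omega
      ext : 1
      decide
    · omega

@[simp]
lemma burauNegOne_σ₁ : burauNegOne σ₁ = unipotentUpper := PresentedGroup.toGroup.of _

@[simp]
lemma burauNegOne_σ₂ : burauNegOne σ₂ = unipotentLower := PresentedGroup.toGroup.of _

lemma trace_burauNegOne_conj_σ₁ (w : Braid 2) :
    (burauNegOne (w * σ₁ * w⁻¹) : Matrix (Fin 2) (Fin 2) ℤ).trace = 2 := by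
  rw [map_mul, map_mul, map_inv, Units.val_mul, Units.val_mul, trace_units_conj,
    burauNegOne_σ₁]
  decide

theorem lem3_braid_not_quasipositive :
    ¬ Quasipositive ((σ₁ ^ 4)⁻¹ * σ₂⁻¹ * σ₁ * (σ₂ ^ 2)⁻¹ * σ₁ * Δ₃ ^ 2) := by
  intro hb
  obtain ⟨w, hw⟩ := hb.exists_eq_conj_of_expSum_eq_one <| by
    simp only [Δ₃, σ₁, σ₂, map_mul, map_inv, map_pow, Braid.expSum_σ]
    decide
  have htrace := congrArg (fun g => (burauNegOne g : Matrix (Fin 2) (Fin 2) ℤ).trace) hw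
  rw [← σ₁, trace_burauNegOne_conj_σ₁] at htrace
  simp only [Δ₃, map_mul, map_inv, map_pow, burauNegOne_σ₁, burauNegOne_σ₂] at htrace
  revert htrace
  decide
end
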